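/- arXiv:1207.4104 — 2 statements merged into one kernel-verified Lean document; each statement's English description precedes it below -/
import Mathlib

section
/- Let m ≥ 1 be fixed, n ≥ m, let γ > 0, ε > 0, β ∈ (0,1), and let V ⊆ {z ∈ ℝ^m : ‖z‖₂ = 1} be a γ-net of the unit sphere with |V| ≤ (1 + 2/γ)^m. Let K ⊆ {1,…,n} be any fixed subset with |K| ≤ βn, and let H be the random n×m Toeplitz matrix built from i.i.d. Rademacher inputs. Then with probability at least 1 − 4(1 + 2/γ)^m e^{−ε² n² / (2(n+m−1)m)}, the following hold simultaneously for every z ∈ V: (i) ‖Hz‖₁ ≥ n/(2√m) − εn, and (ii) ‖(Hz)_K‖₁ ≤ βn√m + εn. -/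
open MeasureTheory ProbabilityTheory Finset Filter

noncomputable section

/-- The `n × m` Toeplitz matrix built from the input sequence
`h = (h_{-m+2}, …, h_n)`, reindexed as `h : Fin (n+m-1) → ℝ`;
the `(i,j)` entry (0-based) is the input with index `i + j`, which corresponds to
`H_{i,j} = h_{i-m+j}` in 1-based indexing. -/
def toeplitz (n m : ℕ) (h : Fin (n + m - 1) → ℝ) : Matrix (Fin n) (Fin m) ℝ :=
  fun i j => h ⟨i.1 + j.1, by have := i.2; have := j.2; omega⟩

/-- The ℓ¹ norm of a vector in `ℝ^k`. -/
def l1 {k : ℕ} (v : Fin k → ℝ) : ℝ := ∑ i, |v i|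

/-- The Euclidean (ℓ²) norm of a vector in `ℝ^k`. -/
def l2 {k : ℕ} (v : Fin k → ℝ) : ℝ := Real.sqrt (∑ i, (v i) ^ 2)

/-- The Rademacher measure on ℝ: values `+1` and `-1` with probability `1/2` each. -/
def radMeasure : Measure ℝ :=
  (2 : ENNReal)⁻¹ • Measure.dirac 1 + (2 : ENNReal)⁻¹ • Measure.dirac (-1)

/-- Product of `d` i.i.d. Rademacher measures on `ℝ^d`. -/
def radPi (d : ℕ) : Measure (Fin d → ℝ) := Measure.pi fun _ => radMeasure

open Classical in
/-- Number of nonzero entries of a vector. -/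
def sparsity {k : ℕ} (v : Fin k → ℝ) : ℕ := (Finset.univ.filter fun i => v i ≠ 0).card

/-!
Everything happens on the sign cube `{±1}^(n+m-1)`, on which `radPi` is uniform, so
probabilities are proportions of sign vectors. For a unit vector `z`, flipping one input changes
`‖H z‖₁` by at most `2 ‖z‖₁ ≤ 2 √m` (Young's inequality `‖g ∗ z‖₁ ≤ ‖g‖₁ ‖z‖₁`), so McDiarmid's
inequality bounds the lower tail of `‖H z‖₁` by `exp (-ε²n² / (2 (n+m-1) m))`. Its mean is at
least `n / √m`, since each row gives `𝔼 |X| ≥ 𝔼 X² / ‖X‖_∞ ≥ 1 / ‖z‖₁`. Bound (ii) holds for every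
sign vector, as `|(H z)ᵢ| ≤ ‖z‖₁ ≤ √m`. A union bound over `V` finishes the proof.
-/

open scoped BigOperators ENNReal Matrix

lemma sum_comp_le_sum_of_injective {α β : Type*} [Fintype α] [Fintype β] {e : α → β}
    (he : Function.Injective e) {g : β → ℝ} (hg : ∀ b, 0 ≤ g b) : ∑ a, g (e a) ≤ ∑ b, g b :=
  (Finset.sum_map _ ⟨e, he⟩ g).symm.le.trans (Finset.sum_le_univ_sum_of_nonneg hg)

section SignCube

variable {d : ℕ}

def signCube (d : ℕ) : Finset (Fin d → ℝ) := Fintype.piFinset fun _ => {1, -1}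

lemma mem_signCube {ω : Fin d → ℝ} : ω ∈ signCube d ↔ ∀ i, ω i = 1 ∨ ω i = -1 := by
  simp [signCube]

lemma card_signCube (d : ℕ) : #(signCube d) = 2 ^ d := by
  simp [signCube, Finset.card_pair (show (1 : ℝ) ≠ -1 by norm_num)]

lemma signCube_nonempty (d : ℕ) : (signCube d).Nonempty := ⟨fun _ => 1, by simp [mem_signCube]⟩

lemma abs_eq_one_of_mem_signCube {ω : Fin d → ℝ} (hω : ω ∈ signCube d) (i : Fin d) :
    |ω i| = 1 := by
  rcases mem_signCube.mp hω i with h | h <;> simp [h]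

lemma update_neg_mem_signCube {ω : Fin d → ℝ} (hω : ω ∈ signCube d) (a : Fin d) :
    Function.update ω a (-ω a) ∈ signCube d := by
  rw [mem_signCube] at hω ⊢
  intro i
  rcases eq_or_ne i a with rfl | h
  · rcases hω i with h | h <;> simp [h]
  · simpa [Function.update_of_ne h] using hω i

lemma cons_mem_signCube {x : ℝ} (hx : x = 1 ∨ x = -1) {ω : Fin d → ℝ} (hω : ω ∈ signCube d) :
    (Fin.cons x ω : Fin (d + 1) → ℝ) ∈ signCube (d + 1) := by
  rw [mem_signCube] at hω ⊢
  exact Fin.cases hx hω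

lemma expect_signCube_succ (F : (Fin (d + 1) → ℝ) → ℝ) :
    𝔼 ω ∈ signCube (d + 1), F ω =
      (𝔼 ω ∈ signCube d, F (Fin.cons 1 ω) + 𝔼 ω ∈ signCube d, F (Fin.cons (-1) ω)) / 2 := by
  have h : 𝔼 ω ∈ signCube (d + 1), F ω = 𝔼 p ∈ {1, -1} ×ˢ signCube d, F (Fin.cons p.1 p.2) :=
    Finset.expect_nbij' (fun ω => (ω 0, Fin.tail ω)) (fun p => Fin.cons p.1 p.2)
      (fun ω hω => by simp_all [mem_signCube, Fin.tail])
      (by simp [mem_signCube, Fin.forall_fin_succ]) (by simp) (by simp) (by simp)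
  rw [h, Finset.expect_product, Finset.expect_eq_sum_div_card, Finset.sum_pair (by norm_num),
    Finset.card_pair (by norm_num)]
  norm_num

lemma expect_signCube_mul_self (a : Fin d) : 𝔼 ω ∈ signCube d, ω a * ω a = 1 := by
  rw [Finset.expect_congr rfl fun ω hω => ?_, Finset.expect_const (signCube_nonempty d)]
  rcases mem_signCube.mp hω a with h | h <;> simp [h]

lemma expect_signCube_mul_of_ne {a b : Fin d} (hab : a ≠ b) :
    𝔼 ω ∈ signCube d, ω a * ω b = 0 := by
  rw [Finset.expect_eq_sum_div_card, div_eq_zero_iff]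
  left
  refine Finset.sum_involution (fun ω _ => Function.update ω a (-ω a))
    (fun ω _ => by simp [Function.update_of_ne hab.symm]) (fun ω hω _ h => ?_)
    (fun ω hω => update_neg_mem_signCube hω a) (fun ω _ => by simp)
  have h1 := congrFun h a
  have h2 := abs_eq_one_of_mem_signCube hω a
  simp only [Function.update_self, neg_eq_self] at h1
  simp [h1] at h2

lemma expect_signCube_sq_sum {ι : Type*} [Fintype ι] {a : ι → Fin d}
    (ha : Function.Injective a) (z : ι → ℝ) :
    𝔼 ω ∈ signCube d, (∑ j, ω (a j) * z j) ^ 2 = ∑ j, z j ^ 2 := by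
  classical
  have hterm : ∀ j j', 𝔼 ω ∈ signCube d, ω (a j) * z j * (ω (a j') * z j') =
      if j = j' then z j ^ 2 else 0 := by
    intro j j'
    simp_rw [mul_mul_mul_comm _ (z j), ← Finset.expect_mul]
    split_ifs with h
    · rw [h, expect_signCube_mul_self, one_mul, sq]
    · rw [expect_signCube_mul_of_ne (ha.ne h), zero_mul]
  simp_rw [sq, Finset.sum_mul_sum, Finset.expect_sum_comm, hterm, Finset.sum_ite_eq,
    Finset.mem_univ, if_true, sq]

lemma abs_sum_signCube_mul_le {ι : Type*} [Fintype ι] {ω : Fin d → ℝ} (hω : ω ∈ signCube d)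
    (a : ι → Fin d) (z : ι → ℝ) : |∑ j, ω (a j) * z j| ≤ ∑ j, |z j| :=
  (Finset.abs_sum_le_sum_abs _ _).trans_eq <| Finset.sum_congr rfl fun j _ => by
    rw [abs_mul, abs_eq_one_of_mem_signCube hω, one_mul]

lemma sum_sq_le_mul_expect_abs {ι : Type*} [Fintype ι] {a : ι → Fin d}
    (ha : Function.Injective a) (z : ι → ℝ) :
    ∑ j, z j ^ 2 ≤ (∑ j, |z j|) * 𝔼 ω ∈ signCube d, |∑ j, ω (a j) * z j| := by
  rw [← expect_signCube_sq_sum ha, Finset.mul_expect]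
  refine Finset.expect_le_expect fun ω hω => ?_
  rw [← sq_abs, sq]
  exact mul_le_mul_of_nonneg_right (abs_sum_signCube_mul_le hω a z) (abs_nonneg _)

end SignCube

section McDiarmid

variable {d : ℕ}

def BoundedDifferences (f : (Fin d → ℝ) → ℝ) (c : Fin d → ℝ) : Prop :=
  ∀ ω ∈ signCube d, ∀ k, |f ω - f (Function.update ω k (-ω k))| ≤ c k

namespace BoundedDifferences

lemma mono {f : (Fin d → ℝ) → ℝ} {c c' : Fin d → ℝ}
    (hf : BoundedDifferences f c) (hc : ∀ k, c k ≤ c' k) : BoundedDifferences f c' :=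
  fun ω hω k => (hf ω hω k).trans (hc k)

variable {f : (Fin (d + 1) → ℝ) → ℝ} {c : Fin (d + 1) → ℝ}

lemma comp_cons (hf : BoundedDifferences f c) {x : ℝ} (hx : x = 1 ∨ x = -1) :
    BoundedDifferences (fun ω => f (Fin.cons x ω)) (Fin.tail c) := by
  intro ω hω k
  simpa [Fin.cons_update, Fin.tail] using hf _ (cons_mem_signCube hx hω) k.succ

lemma abs_expect_cons_sub_le (hf : BoundedDifferences f c) :
    |𝔼 ω ∈ signCube d, f (Fin.cons 1 ω) - 𝔼 ω ∈ signCube d, f (Fin.cons (-1) ω)| ≤ c 0 := by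
  rw [← Finset.expect_sub_distrib]
  refine (Finset.abs_expect_le _ _).trans <| Finset.expect_le (signCube_nonempty d) fun ω hω => ?_
  simpa [Fin.update_cons_zero] using hf _ (cons_mem_signCube (.inl rfl) hω) 0

end BoundedDifferences

/-- Induction on `d`, conditioning on the first sign: the two conditional means differ by at most
`c 0`, and `cosh x ≤ exp (x ^ 2 / 2)`. -/
theorem BoundedDifferences.expect_exp_le {f : (Fin d → ℝ) → ℝ} {c : Fin d → ℝ}
    (hf : BoundedDifferences f c) (l : ℝ) :
    𝔼 ω ∈ signCube d, Real.exp (l * (𝔼 η ∈ signCube d, f η - f ω)) ≤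
      Real.exp (l ^ 2 * (∑ k, c k ^ 2) / 8) := by
  induction d with
  | zero =>
    have hconst : ∀ ω ∈ signCube 0, 𝔼 η ∈ signCube 0, f η = f ω := fun ω _ => by
      rw [Finset.expect_congr rfl fun η _ => congrArg f (Subsingleton.elim η ω),
        Finset.expect_const (signCube_nonempty 0)]
    rw [Finset.expect_congr rfl (g := fun _ => 1) fun ω hω => by
      rw [hconst ω hω, sub_self, mul_zero, Real.exp_zero],
      Finset.expect_const (signCube_nonempty 0)]
    simp
  | succ d ih =>
    have half : ∀ (x : ℝ) {g : (Fin d → ℝ) → ℝ}, BoundedDifferences g (Fin.tail c) →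
        𝔼 ω ∈ signCube d, Real.exp (l * (x - g ω)) ≤ Real.exp (l * (x - 𝔼 η ∈ signCube d, g η)) *
          Real.exp (l ^ 2 * (∑ k, Fin.tail c k ^ 2) / 8) := by
      intro x g hg
      calc 𝔼 ω ∈ signCube d, Real.exp (l * (x - g ω))
          = Real.exp (l * (x - 𝔼 η ∈ signCube d, g η)) *
              𝔼 ω ∈ signCube d, Real.exp (l * (𝔼 η ∈ signCube d, g η - g ω)) := by
            rw [Finset.mul_expect]
            simp_rw [← Real.exp_add]
            ring_nf
        _ ≤ _ := mul_le_mul_of_nonneg_left (ih hg) (Real.exp_nonneg _)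
    rw [expect_signCube_succ fun ω => Real.exp (l * (𝔼 η ∈ signCube (d + 1), f η - f ω)),
      expect_signCube_succ f]
    refine (div_le_div_of_nonneg_right (add_le_add (half _ (hf.comp_cons (.inl rfl)))
      (half _ (hf.comp_cons (.inr rfl)))) zero_le_two).trans ?_
    have hdiff := hf.abs_expect_cons_sub_le
    set μp := 𝔼 ω ∈ signCube d, f (Fin.cons 1 ω)
    set μm := 𝔼 ω ∈ signCube d, f (Fin.cons (-1) ω)
    have hcosh : Real.cosh (l * ((μm - μp) / 2)) ≤ Real.exp (l ^ 2 * c 0 ^ 2 / 8) := by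
      refine (Real.cosh_le_exp_half_sq _).trans (Real.exp_le_exp.mpr ?_)
      have : (μm - μp) ^ 2 ≤ c 0 ^ 2 := by
        rw [← sq_abs, abs_sub_comm]; exact pow_le_pow_left₀ (abs_nonneg _) hdiff 2
      nlinarith [sq_nonneg l]
    calc _ = Real.cosh (l * ((μm - μp) / 2)) * Real.exp (l ^ 2 * (∑ k, Fin.tail c k ^ 2) / 8) := by
          rw [show (μp + μm) / 2 - μp = (μm - μp) / 2 by ring,
            show (μp + μm) / 2 - μm = -((μm - μp) / 2) by ring, mul_neg, Real.cosh_eq]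
          ring
      _ ≤ Real.exp (l ^ 2 * c 0 ^ 2 / 8) * Real.exp (l ^ 2 * (∑ k, Fin.tail c k ^ 2) / 8) :=
          mul_le_mul_of_nonneg_right hcosh (Real.exp_nonneg _)
      _ = _ := by
          rw [← Real.exp_add, Fin.sum_univ_succ]
          simp only [Fin.tail]
          ring_nf

theorem BoundedDifferences.card_filter_le_expect_sub_le {f : (Fin d → ℝ) → ℝ} {c : Fin d → ℝ}
    (hf : BoundedDifferences f c) {t : ℝ} (ht : 0 ≤ t) :
    (#{ω ∈ signCube d | f ω ≤ 𝔼 η ∈ signCube d, f η - t} : ℝ) ≤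
      2 ^ d * Real.exp (-(2 * t ^ 2) / ∑ k, c k ^ 2) := by
  set C := ∑ k, c k ^ 2
  -- Chernoff's bound at the optimal `l`; if `C = 0` then `l = 0` and both sides of `hexp` are `0`.
  set l := 4 * t / C
  have hl : 0 ≤ l := by positivity
  have hexp : l ^ 2 * C / 8 - l * t = -(2 * t ^ 2) / C := by
    rcases eq_or_ne C 0 with hC | hC
    · simp [l, hC]
    · simp only [l]; field_simp; ring
  have hcount : (#{ω ∈ signCube d | f ω ≤ 𝔼 η ∈ signCube d, f η - t} : ℝ) * Real.exp (l * t) ≤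
      2 ^ d * Real.exp (l ^ 2 * C / 8) :=
    calc _ = ∑ ω ∈ signCube d with f ω ≤ 𝔼 η ∈ signCube d, f η - t, Real.exp (l * t) := by
          rw [Finset.sum_const, nsmul_eq_mul]
      _ ≤ ∑ ω ∈ signCube d with f ω ≤ 𝔼 η ∈ signCube d, f η - t,
            Real.exp (l * (𝔼 η ∈ signCube d, f η - f ω)) :=
          Finset.sum_le_sum fun ω hω => Real.exp_le_exp.mpr <|
            mul_le_mul_of_nonneg_left (by linarith [(Finset.mem_filter.mp hω).2]) hl
      _ ≤ ∑ ω ∈ signCube d, Real.exp (l * (𝔼 η ∈ signCube d, f η - f ω)) :=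
          Finset.sum_le_sum_of_subset_of_nonneg (Finset.filter_subset _ _)
            fun _ _ _ => (Real.exp_nonneg _)
      _ ≤ 2 ^ d * Real.exp (l ^ 2 * C / 8) := by
          rw [← Finset.card_mul_expect, card_signCube, Nat.cast_pow, Nat.cast_ofNat]
          exact mul_le_mul_of_nonneg_left (hf.expect_exp_le l) (by positivity)
  rw [← hexp, Real.exp_sub, mul_div_assoc', le_div_iff₀ (Real.exp_pos _)]
  exact hcount

end McDiarmid

section Rademacher

variable {d : ℕ}

instance : IsProbabilityMeasure radMeasure := by
  constructor
  simp [radMeasure, ENNReal.inv_two_add_inv_two]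

lemma radMeasure_singleton {x : ℝ} (hx : x = 1 ∨ x = -1) : radMeasure {x} = 2⁻¹ := by
  rcases hx with rfl | rfl <;> norm_num [radMeasure]

lemma radPi_singleton {ω : Fin d → ℝ} (hω : ω ∈ signCube d) : radPi d {ω} = (2 ^ d)⁻¹ := by
  rw [radPi, ← Set.univ_pi_singleton, Measure.pi_pi]
  simp [radMeasure_singleton (mem_signCube.mp hω _), ENNReal.inv_pow]

lemma card_filter_div_le_radPi (E : Set (Fin d → ℝ)) [DecidablePred (· ∈ E)] :
    (#{ω ∈ signCube d | ω ∈ E} : ℝ≥0∞) / 2 ^ d ≤ radPi d E := by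
  calc (#{ω ∈ signCube d | ω ∈ E} : ℝ≥0∞) / 2 ^ d
      = ∑ ω ∈ signCube d with ω ∈ E, radPi d {ω} := by
        rw [Finset.sum_congr rfl fun ω hω => radPi_singleton (Finset.mem_filter.mp hω).1,
          Finset.sum_const, nsmul_eq_mul, div_eq_mul_inv]
    _ = radPi d ↑(signCube d |>.filter (· ∈ E)) := sum_measure_singleton
    _ ≤ radPi d E := measure_mono fun ω hω => (Finset.mem_filter.mp hω).2

/-- Union bound over events `B z` of uniform probability at most `p` on the sign cube. -/
lemma ofReal_one_sub_mul_le_radPi {ι : Type*} (V : Finset ι) (B : ι → Finset (Fin d → ℝ))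
    {p : ℝ} (hB : ∀ z ∈ V, (#(B z) : ℝ) ≤ 2 ^ d * p) (E : Set (Fin d → ℝ))
    (hE : ∀ ω ∈ signCube d, (∀ z ∈ V, ω ∉ B z) → ω ∈ E) :
    ENNReal.ofReal (1 - #V * p) ≤ radPi d E := by
  classical
  have hgood : signCube d \ V.biUnion B ⊆ {ω ∈ signCube d | ω ∈ E} := fun ω hω => by
    simp only [Finset.mem_sdiff, Finset.mem_biUnion, not_exists, not_and] at hω
    exact Finset.mem_filter.mpr ⟨hω.1, hE ω hω.1 hω.2⟩
  have hbad : (#(V.biUnion B) : ℝ) ≤ #V * (2 ^ d * p) :=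
    calc (#(V.biUnion B) : ℝ) ≤ ∑ z ∈ V, (#(B z) : ℝ) := mod_cast Finset.card_biUnion_le
      _ ≤ ∑ _z ∈ V, 2 ^ d * p := Finset.sum_le_sum hB
      _ = #V * (2 ^ d * p) := by rw [Finset.sum_const, nsmul_eq_mul]
  have hcard : 2 ^ d * (1 - #V * p) ≤ #{ω ∈ signCube d | ω ∈ E} := by
    have h := (Finset.card_le_card_sdiff_add_card (s := signCube d) (t := V.biUnion B)).trans
      (Nat.add_le_add_right (Finset.card_le_card hgood) _)
    rw [card_signCube] at h
    have h' : ((2 ^ d : ℕ) : ℝ) ≤ #{ω ∈ signCube d | ω ∈ E} + #(V.biUnion B) := mod_cast h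
    push_cast at h'
    linarith
  refine le_trans ?_ (card_filter_div_le_radPi E)
  rw [← ENNReal.ofReal_natCast, ← ENNReal.ofReal_ofNat 2, ← ENNReal.ofReal_pow zero_le_two,
    ← ENNReal.ofReal_div_of_pos (by positivity)]
  exact ENNReal.ofReal_le_ofReal ((le_div_iff₀' (by positivity)).mpr hcard)

end Rademacher

section Toeplitz

variable {n m : ℕ}

def toeplitzIndex (n m : ℕ) (i : Fin n) (j : Fin m) : Fin (n + m - 1) := ⟨i + j, by omega⟩

lemma toeplitzIndex_injective (i : Fin n) : Function.Injective (toeplitzIndex n m i) :=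
  fun j j' h => Fin.ext (by simpa [toeplitzIndex] using congrArg Fin.val h)

lemma toeplitzIndex_left_injective (j : Fin m) :
    Function.Injective fun i : Fin n => toeplitzIndex n m i j :=
  fun i i' h => Fin.ext (by simpa [toeplitzIndex] using congrArg Fin.val h)

lemma toeplitz_mulVec_apply (h : Fin (n + m - 1) → ℝ) (z : Fin m → ℝ) (i : Fin n) :
    (toeplitz n m h *ᵥ z) i = ∑ j, h (toeplitzIndex n m i j) * z j := rfl

lemma l1_toeplitz_mulVec_le (g : Fin (n + m - 1) → ℝ) (z : Fin m → ℝ) :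
    l1 (toeplitz n m g *ᵥ z) ≤ l1 g * l1 z := by
  calc l1 (toeplitz n m g *ᵥ z) ≤ ∑ i, ∑ j, |g (toeplitzIndex n m i j)| * |z j| := by
        refine Finset.sum_le_sum fun i _ => ?_
        rw [toeplitz_mulVec_apply]
        exact (Finset.abs_sum_le_sum_abs _ _).trans_eq (Finset.sum_congr rfl fun j _ => abs_mul _ _)
    _ = ∑ j, (∑ i, |g (toeplitzIndex n m i j)|) * |z j| := by
        rw [Finset.sum_comm]; simp_rw [Finset.sum_mul]
    _ ≤ ∑ j, l1 g * |z j| := Finset.sum_le_sum fun j _ => mul_le_mul_of_nonneg_right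
        (sum_comp_le_sum_of_injective (toeplitzIndex_left_injective j) fun _ => abs_nonneg _)
        (abs_nonneg _)
    _ = l1 g * l1 z := (Finset.mul_sum _ _ _).symm

lemma abs_l1_sub_l1_le {k : ℕ} (x y : Fin k → ℝ) : |l1 x - l1 y| ≤ l1 (x - y) := by
  rw [l1, l1, ← Finset.sum_sub_distrib]
  exact (Finset.abs_sum_le_sum_abs _ _).trans <|
    Finset.sum_le_sum fun i _ => abs_abs_sub_abs_le_abs_sub _ _

lemma boundedDifferences_l1_toeplitz_mulVec (z : Fin m → ℝ) :
    BoundedDifferences (fun h => l1 (toeplitz n m h *ᵥ z)) fun _ => 2 * l1 z := by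
  intro h hh k
  have hsub : l1 (h - Function.update h k (-h k)) = 2 := by
    rw [l1, Finset.sum_eq_single k (fun k' _ hk' => by simp [Function.update_of_ne hk'])
      (by simp)]
    simp [← two_mul, abs_eq_one_of_mem_signCube hh]
  calc _ ≤ l1 (toeplitz n m h *ᵥ z - toeplitz n m (Function.update h k (-h k)) *ᵥ z) :=
        abs_l1_sub_l1_le _ _
    _ = l1 (toeplitz n m (h - Function.update h k (-h k)) *ᵥ z) := by
        rw [← Matrix.sub_mulVec]; rfl
    _ ≤ 2 * l1 z := (l1_toeplitz_mulVec_le _ z).trans_eq (by rw [hsub])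

lemma abs_toeplitz_mulVec_le {h : Fin (n + m - 1) → ℝ} (hh : h ∈ signCube (n + m - 1))
    (z : Fin m → ℝ) (i : Fin n) : |(toeplitz n m h *ᵥ z) i| ≤ l1 z :=
  abs_sum_signCube_mul_le hh _ z

lemma mul_sum_sq_le_mul_expect_l1_toeplitz_mulVec (z : Fin m → ℝ) :
    n * ∑ j, z j ^ 2 ≤ l1 z * 𝔼 h ∈ signCube (n + m - 1), l1 (toeplitz n m h *ᵥ z) := by
  calc n * ∑ j, z j ^ 2 = ∑ _i : Fin n, ∑ j, z j ^ 2 := by simp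
    _ ≤ ∑ i : Fin n, l1 z * 𝔼 h ∈ signCube (n + m - 1), |(toeplitz n m h *ᵥ z) i| :=
        Finset.sum_le_sum fun i _ => sum_sq_le_mul_expect_abs (toeplitzIndex_injective i) z
    _ = l1 z * 𝔼 h ∈ signCube (n + m - 1), l1 (toeplitz n m h *ᵥ z) := by
        rw [← Finset.mul_sum, ← Finset.expect_sum_comm]; rfl

end Toeplitz

lemma l1_le_sqrt_of_l2_eq_one {m : ℕ} {z : Fin m → ℝ} (hz : l2 z = 1) : l1 z ≤ √m := by
  have hsq : ∑ j, z j ^ 2 = 1 := Real.sqrt_eq_one.mp hz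
  refine Real.le_sqrt_of_sq_le ?_
  calc l1 z ^ 2 ≤ #(Finset.univ : Finset (Fin m)) * ∑ j, |z j| ^ 2 := sq_sum_le_card_mul_sum_sq
    _ = m := by simp [hsq]

lemma card_filter_l1_toeplitz_mulVec_lt_le {n m : ℕ} (hm : 1 ≤ m) {z : Fin m → ℝ}
    (hz : l2 z = 1) {ε : ℝ} (hε : 0 ≤ ε) :
    (#{h ∈ signCube (n + m - 1) | l1 (toeplitz n m h *ᵥ z) < n / (2 * √m) - ε * n} : ℝ) ≤
      2 ^ (n + m - 1) * Real.exp (-(ε ^ 2 * n ^ 2) / (2 * (n + m - 1) * m)) := by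
  set F := fun h => l1 (toeplitz n m h *ᵥ z)
  have hsqrt : 0 < √(m : ℝ) := Real.sqrt_pos.mpr (by exact_mod_cast hm)
  have hl1 := l1_le_sqrt_of_l2_eq_one hz
  have hmean : n / √m ≤ 𝔼 h ∈ signCube (n + m - 1), F h := by
    have hF : 0 ≤ 𝔼 h ∈ signCube (n + m - 1), F h :=
      Finset.expect_nonneg fun h _ => Finset.sum_nonneg fun i _ => abs_nonneg _
    have h := mul_sum_sq_le_mul_expect_l1_toeplitz_mulVec (n := n) z
    rw [Real.sqrt_eq_one.mp hz, mul_one] at h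
    exact div_le_of_le_mul₀ hsqrt.le hF
      ((h.trans (mul_le_mul_of_nonneg_right hl1 hF)).trans_eq (mul_comm _ _))
  have hsub : {h ∈ signCube (n + m - 1) | F h < n / (2 * √m) - ε * n} ⊆
      {h ∈ signCube (n + m - 1) | F h ≤ 𝔼 h ∈ signCube (n + m - 1), F h - ε * n} := by
    intro h hh
    rw [Finset.mem_filter] at hh ⊢
    have : (n : ℝ) / (2 * √m) ≤ n / √m :=
      div_le_div_of_nonneg_left (Nat.cast_nonneg _) hsqrt (by linarith)
    exact ⟨hh.1, by linarith [hh.2]⟩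
  have hbd := (boundedDifferences_l1_toeplitz_mulVec (n := n) z).mono fun _ =>
    mul_le_mul_of_nonneg_left hl1 zero_le_two
  have hsum : (∑ _k : Fin (n + m - 1), (2 * √(m : ℝ)) ^ 2) = 2 * (2 * ((n : ℝ) + m - 1) * m) := by
    simp only [Finset.sum_const, Finset.card_univ, Fintype.card_fin, nsmul_eq_mul, mul_pow,
      Real.sq_sqrt (Nat.cast_nonneg _)]
    rw [Nat.cast_sub (by omega)]
    push_cast
    ring
  have hexp : -(2 * (ε * n) ^ 2) / ∑ _k : Fin (n + m - 1), (2 * √(m : ℝ)) ^ 2 =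
      -(ε ^ 2 * n ^ 2) / (2 * (n + m - 1) * m) := by
    rw [hsum, show -(2 * (ε * n) ^ 2) = 2 * -(ε ^ 2 * n ^ 2) by ring,
      mul_div_mul_left _ _ two_ne_zero]
  calc _ ≤ (#{h ∈ signCube (n + m - 1) | F h ≤ 𝔼 h ∈ signCube (n + m - 1), F h - ε * n} : ℝ) :=
        mod_cast Finset.card_le_card hsub
    _ ≤ _ := (hbd.card_filter_le_expect_sub_le (by positivity)).trans_eq (by rw [hexp])

lemma sum_abs_toeplitz_mulVec_le {n m : ℕ} {h : Fin (n + m - 1) → ℝ}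
    (hh : h ∈ signCube (n + m - 1)) (z : Fin m → ℝ) (K : Finset (Fin n)) :
    ∑ i ∈ K, |(toeplitz n m h *ᵥ z) i| ≤ #K * l1 z :=
  (Finset.sum_le_sum fun i _ => abs_toeplitz_mulVec_le hh z i).trans_eq (by simp)

theorem stmt11_general (m n : ℕ) (hm : 1 ≤ m)
    (γ ε β : ℝ) (hε : 0 < ε)
    (V : Finset (Fin m → ℝ))
    (hVsphere : ∀ v ∈ V, l2 v = 1)
    (hVcard : (V.card : ℝ) ≤ (1 + 2 / γ) ^ m)
    (K : Finset (Fin n)) (hK : (K.card : ℝ) ≤ β * n) :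
    ENNReal.ofReal
        (1 - 4 * (1 + 2 / γ) ^ m *
          Real.exp (-(ε ^ 2 * (n : ℝ) ^ 2) / (2 * ((n : ℝ) + m - 1) * m))) ≤
      radPi (n + m - 1)
        {h | ∀ z ∈ V,
          (n : ℝ) / (2 * Real.sqrt (m : ℝ)) - ε * n ≤
              l1 ((toeplitz n m h).mulVec z) ∧
            ∑ i ∈ K, |(toeplitz n m h).mulVec z i| ≤
              β * n * Real.sqrt (m : ℝ) + ε * n} := by
  set p := Real.exp (-(ε ^ 2 * (n : ℝ) ^ 2) / (2 * ((n : ℝ) + m - 1) * m))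
  have hV : (V.card : ℝ) * p ≤ 4 * (1 + 2 / γ) ^ m * p :=
    mul_le_mul_of_nonneg_right (by linarith [(Nat.cast_nonneg V.card : (0 : ℝ) ≤ _)])
      (Real.exp_nonneg _)
  refine (ENNReal.ofReal_le_ofReal (by linarith)).trans <| ofReal_one_sub_mul_le_radPi V
    (fun z => {h ∈ signCube (n + m - 1) |
      l1 ((toeplitz n m h).mulVec z) < n / (2 * √m) - ε * n})
    (fun z hz => card_filter_l1_toeplitz_mulVec_lt_le hm (hVsphere z hz) hε.le) _ ?_
  intro h hh hgood z hz
  refine ⟨not_lt.mp fun hlt => hgood z hz (Finset.mem_filter.mpr ⟨hh, hlt⟩), ?_⟩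
  calc _ ≤ #K * l1 z := sum_abs_toeplitz_mulVec_le hh z K
    _ ≤ β * n * √m := mul_le_mul hK (l1_le_sqrt_of_l2_eq_one (hVsphere z hz))
        (Finset.sum_nonneg fun _ _ => abs_nonneg _) ((Nat.cast_nonneg _).trans hK)
    _ ≤ _ := le_add_of_nonneg_right (by positivity)

/-- Union bound over a `γ`-net `V` of the unit sphere with
`|V| ≤ (1 + 2/γ)^m` and a fixed subset `K` with `|K| ≤ βn`: with probability at least
`1 - 4(1 + 2/γ)^m e^{-ε²n²/(2(n+m-1)m)}` the Rademacher Toeplitz matrix satisfies,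
simultaneously for every `z ∈ V`, (i) `‖Hz‖₁ ≥ n/(2√m) - εn` and
(ii) `‖(Hz)_K‖₁ ≤ βn√m + εn`. -/
theorem stmt11 (m n : ℕ) (hm : 1 ≤ m) (hmn : m ≤ n)
    (γ ε β : ℝ) (hγ : 0 < γ) (hε : 0 < ε) (hβ0 : 0 < β) (hβ1 : β < 1)
    (V : Finset (Fin m → ℝ))
    (hVsphere : ∀ v ∈ V, l2 v = 1)
    (hVnet : ∀ z : Fin m → ℝ, l2 z = 1 → ∃ v ∈ V, l2 (z - v) ≤ γ)
    (hVcard : (V.card : ℝ) ≤ (1 + 2 / γ) ^ m)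
    (K : Finset (Fin n)) (hK : (K.card : ℝ) ≤ β * n) :
    ENNReal.ofReal
        (1 - 4 * (1 + 2 / γ) ^ m *
          Real.exp (-(ε ^ 2 * (n : ℝ) ^ 2) / (2 * ((n : ℝ) + m - 1) * m))) ≤
      radPi (n + m - 1)
        {h | ∀ z ∈ V,
          (n : ℝ) / (2 * Real.sqrt (m : ℝ)) - ε * n ≤
              l1 ((toeplitz n m h).mulVec z) ∧
            ∑ i ∈ K, |(toeplitz n m h).mulVec z i| ≤
              β * n * Real.sqrt (m : ℝ) + ε * n} :=
  stmt11_general m n hm γ ε β hε V hVsphere hVcard K hK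
end
end

section
/- Let m ≥ 1, n ≥ m, fix t > 0, fix v ∈ ℝ^m with ‖v‖₂ = 1, and fix l ∈ ℝ^n. Define g : ℝ^{n+m−1} → ℝ by g(h) = Σ_{i=1}^n (|l_i + t·(H(h)v)_i| − |l_i|), where H(h) is the n×m Toeplitz matrix built from the input sequence h = (h_{-m+2},…,h_n). Then g is Lipschitz with constant t√(mn) with respect to the Euclidean norm: for all a, b ∈ ℝ^{n+m−1}, |g(a) − g(b)| ≤ t√(mn)·‖a − b‖₂. -/
open MeasureTheory ProbabilityTheory Finset Filter

noncomputable section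

/-- Product of `d` i.i.d. standard Gaussian `N(0,1)` measures on `ℝ^d`. -/
def gaussPi (d : ℕ) : Measure (Fin d → ℝ) := Measure.pi fun _ => gaussianReal 0 1

/-- The standard Gaussian cumulative distribution function `Φ`. -/
def stdGaussianCDF (t : ℝ) : ℝ :=
  (Real.sqrt (2 * Real.pi))⁻¹ * ∫ x in Set.Iic t, Real.exp (-x ^ 2 / 2)

/-! Each summand `|lᵢ + t xᵢ| - |lᵢ|` is `t`-Lipschitz in `xᵢ`, so the difference is at most
`t ‖H(a - b) v‖₁ ≤ t √n ‖H(a - b) v‖₂`. The Frobenius norm of `H(c)` bounds its operator norm,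
and it is at most `√m ‖c‖₂` because each of the `m` columns of `H(c)` is a segment of `c`. -/

open scoped Matrix

theorem abs_sum_abs_add_sub_le {k : ℕ} (l x y : Fin k → ℝ) {t : ℝ} (ht : 0 ≤ t) :
    |(∑ i, (|l i + t * x i| - |l i|)) - (∑ i, (|l i + t * y i| - |l i|))| ≤ t * l1 (x - y) := by
  rw [← Finset.sum_sub_distrib, l1, Finset.mul_sum]
  refine (Finset.abs_sum_le_sum_abs _ _).trans (Finset.sum_le_sum fun i _ => ?_)
  calc |(|l i + t * x i| - |l i|) - (|l i + t * y i| - |l i|)|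
      = |(|l i + t * x i| - |l i + t * y i|)| := by rw [sub_sub_sub_cancel_right]
    _ ≤ |(l i + t * x i) - (l i + t * y i)| := abs_abs_sub_abs_le_abs_sub _ _
    _ = t * |(x - y) i| := by
      rw [add_sub_add_left_eq_sub, ← mul_sub, abs_mul, abs_of_nonneg ht, Pi.sub_apply]

theorem l1_le_sqrt_card_mul_l2 {k : ℕ} (w : Fin k → ℝ) : l1 w ≤ Real.sqrt k * l2 w := by
  simpa [l1, l2] using Real.sum_mul_le_sqrt_mul_sqrt Finset.univ (fun _ => (1 : ℝ)) (|w ·|)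

theorem l2_mulVec_le {n m : ℕ} (A : Matrix (Fin n) (Fin m) ℝ) (v : Fin m → ℝ) :
    l2 (A *ᵥ v) ≤ Real.sqrt (∑ i, ∑ j, A i j ^ 2) * l2 v := by
  have hrow (i : Fin n) : (A *ᵥ v) i ^ 2 ≤ (∑ j, A i j ^ 2) * ∑ j, v j ^ 2 :=
    Finset.sum_mul_sq_le_sq_mul_sq Finset.univ (A i) v
  rw [l2, l2, ← Real.sqrt_mul (by positivity), Finset.sum_mul]
  exact Real.sqrt_le_sqrt (Finset.sum_le_sum fun i _ => hrow i)

theorem toeplitz_sub (n m : ℕ) (a b : Fin (n + m - 1) → ℝ) :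
    toeplitz n m (a - b) = toeplitz n m a - toeplitz n m b :=
  rfl

theorem sum_sq_toeplitz_le (n m : ℕ) (c : Fin (n + m - 1) → ℝ) :
    ∑ i, ∑ j, toeplitz n m c i j ^ 2 ≤ m * ∑ k, c k ^ 2 := by
  rw [Finset.sum_comm]
  have hcol (j : Fin m) : ∑ i, toeplitz n m c i j ^ 2 ≤ ∑ k, c k ^ 2 := by
    let e : Fin n ↪ Fin (n + m - 1) :=
      ⟨fun i => ⟨i.1 + j.1, by omega⟩, fun x y hxy => Fin.ext (by simpa using hxy)⟩
    calc ∑ i, toeplitz n m c i j ^ 2 = ∑ k ∈ Finset.univ.map e, c k ^ 2 := by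
          rw [Finset.sum_map]; rfl
      _ ≤ ∑ k, c k ^ 2 := Finset.sum_le_univ_sum_of_nonneg fun _ => sq_nonneg _
  simpa using Finset.sum_le_sum fun j (_ : j ∈ Finset.univ) => hcol j

theorem l2_toeplitz_mulVec_le (n m : ℕ) (c : Fin (n + m - 1) → ℝ) (v : Fin m → ℝ) :
    l2 (toeplitz n m c *ᵥ v) ≤ Real.sqrt m * l2 c * l2 v := by
  refine (l2_mulVec_le _ v).trans (mul_le_mul_of_nonneg_right ?_ (Real.sqrt_nonneg _))
  rw [l2, ← Real.sqrt_mul (Nat.cast_nonneg m)]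
  exact Real.sqrt_le_sqrt (sum_sq_toeplitz_le n m c)

theorem stmt18_general (m n : ℕ) (t : ℝ) (ht : 0 < t)
    (v : Fin m → ℝ) (hv : l2 v = 1) (l : Fin n → ℝ)
    (a b : Fin (n + m - 1) → ℝ) :
    |(∑ i, (|l i + t * (toeplitz n m a).mulVec v i| - |l i|)) -
        (∑ i, (|l i + t * (toeplitz n m b).mulVec v i| - |l i|))| ≤
      t * Real.sqrt ((m : ℝ) * n) * l2 (a - b) := by
  calc _ ≤ t * l1 (toeplitz n m a *ᵥ v - toeplitz n m b *ᵥ v) :=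
        abs_sum_abs_add_sub_le l _ _ ht.le
    _ = t * l1 (toeplitz n m (a - b) *ᵥ v) := by rw [toeplitz_sub, Matrix.sub_mulVec]
    _ ≤ t * (Real.sqrt n * (Real.sqrt m * l2 (a - b) * l2 v)) := by
        gcongr
        exact (l1_le_sqrt_card_mul_l2 _).trans
          (by gcongr; exact l2_toeplitz_mulVec_le n m _ v)
    _ = t * Real.sqrt ((m : ℝ) * n) * l2 (a - b) := by
        rw [hv, Real.sqrt_mul (Nat.cast_nonneg m)]; ring

/-- For fixed `t > 0`, a fixed unit vector `v` and a fixed `l ∈ ℝ^n`,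
the map `h ↦ ∑ᵢ (|lᵢ + t(H(h)v)ᵢ| - |lᵢ|)` on the input sequence `h ∈ ℝ^{n+m-1}` is
Lipschitz with constant `t√(mn)` with respect to the Euclidean norm. -/
theorem stmt18 (m n : ℕ) (hm : 1 ≤ m) (hmn : m ≤ n) (t : ℝ) (ht : 0 < t)
    (v : Fin m → ℝ) (hv : l2 v = 1) (l : Fin n → ℝ)
    (a b : Fin (n + m - 1) → ℝ) :
    |(∑ i, (|l i + t * (toeplitz n m a).mulVec v i| - |l i|)) -
        (∑ i, (|l i + t * (toeplitz n m b).mulVec v i| - |l i|))| ≤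
      t * Real.sqrt ((m : ℝ) * n) * l2 (a - b) :=
  stmt18_general m n t ht v hv l a b
end
end
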